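/- Let A = {H_1, …, H_m} be a linear hyperplane arrangement in ℝ^d. Then the union over all nonzero subspaces L in the intersection lattice of A of the orthogonal complements L^⊥ equals the union over all closed chambers C of the topological boundary of the dual cone C°. -/

import Mathlib

open scoped RealInnerProductSpace Pointwise Classical
open Set

noncomputable section

abbrev E (d : ℕ) : Type := EuclideanSpace ℝ (Fin d)

variable {d : ℕ}

/-- Positive hull: all finite nonnegative combinations of elements of `A`. -/
def posHull (A : Set (E d)) : Set (E d) :=
  {x | ∃ (n : ℕ) (c : Fin n → ℝ) (v : Fin n → E d),
    (∀ i, 0 ≤ c i) ∧ (∀ i, v i ∈ A) ∧ x = ∑ i, c i • v i}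

/-- Dual (polar) cone. -/
def polarCone (C : Set (E d)) : Set (E d) := {z | ∀ y ∈ C, ⟪z, y⟫ ≤ 0}

/-- A polyhedral cone: finite intersection of linear closed half-spaces. -/
def IsPolyCone (C : Set (E d)) : Prop :=
  ∃ (m : ℕ) (y : Fin m → E d), C = {z | ∀ i, ⟪z, y i⟫ ≤ 0}

/-- A polyhedral set: finite intersection of closed half-spaces. -/
def IsPolyhedron (P : Set (E d)) : Prop :=
  ∃ (m : ℕ) (y : Fin m → E d) (c : Fin m → ℝ), P = {z | ∀ i, ⟪z, y i⟫ ≤ c i}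

/-- Faces of `P`: `P` itself, or intersections with supporting hyperplanes. -/
def IsFaceOf (P F : Set (E d)) : Prop :=
  F = P ∨ ∃ (y : E d) (c : ℝ), (∀ z ∈ P, ⟪y, z⟫ ≤ c) ∧ F = {z | z ∈ P ∧ ⟪y, z⟫ = c}

/-- Dimension of a set: dimension of its affine hull. -/
def sdim (F : Set (E d)) : ℕ := Module.finrank ℝ (affineSpan ℝ F).direction

/-- The `k`-dimensional (nonempty) faces of `P`. -/
def facesOfDim (P : Set (E d)) (k : ℕ) : Set (Set (E d)) :=
  {F | IsFaceOf P F ∧ F.Nonempty ∧ sdim F = k}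

/-- Tangent cone of `P` at a point `f₀`. -/
def tangentConeOf (P : Set (E d)) (f₀ : E d) : Set (E d) :=
  {u | ∃ δ : ℝ, 0 < δ ∧ f₀ + δ • u ∈ P}

/-- Normal cone of `P` at its face `F`: polar of the tangent cone at any
relative interior point of `F`. -/
def normalCone (P F : Set (E d)) : Set (E d) :=
  {z | ∀ f₀ ∈ intrinsicInterior ℝ F, ∀ u ∈ tangentConeOf P f₀, ⟪z, u⟫ ≤ 0}

/-- `y` is a nearest point of `P` to `x`. -/
def IsNearestPt (P : Set (E d)) (x y : E d) : Prop :=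
  y ∈ P ∧ ∀ z ∈ P, dist x y ≤ dist x z

/-- `dim(x,P) = k`: the metric projection of `x` onto `P` lies in the relative
interior of a `k`-dimensional face of `P`. -/
def projDimEq (P : Set (E d)) (x : E d) (k : ℕ) : Prop :=
  ∃ y F, IsNearestPt P x y ∧ IsFaceOf P F ∧ y ∈ intrinsicInterior ℝ F ∧ sdim F = k

def IsHyperplane (H : Set (E d)) : Prop :=
  ∃ (y : E d) (c : ℝ), y ≠ 0 ∧ H = {z | ⟪y, z⟫ = c}

def IsLinearHyperplane (H : Set (E d)) : Prop :=
  ∃ y : E d, y ≠ 0 ∧ H = {z | ⟪y, z⟫ = 0}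

/-- Closed chambers of the complement of the set `S`. -/
def IsChamberOfUnion (S P : Set (E d)) : Prop :=
  ∃ x : E d, x ∉ S ∧ P = closure (connectedComponentIn Sᶜ x)

/-- Closed chambers of the hyperplane arrangement `A`. -/
def IsChamber (A : Finset (Set (E d))) (P : Set (E d)) : Prop :=
  IsChamberOfUnion (⋃ H ∈ A, H) P

/-- Intersection of a finite subcollection of hyperplanes (`⊤` for `∅`). -/
def interSet (B : Finset (Set (E d))) : Set (E d) := ⋂ H ∈ B, H

/-- The unsigned coefficient `a_k` of the characteristic polynomial:
`χ_A(t) = Σ_k (-1)^(d-k) a_k t^k` via Whitney's formula. -/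
def charCoeff (A : Finset (Set (E d))) (k : ℕ) : ℤ :=
  (-1 : ℤ) ^ (d - k) *
    ∑ B ∈ A.powerset,
      if (interSet B).Nonempty ∧ sdim (interSet B) = k then (-1 : ℤ) ^ B.card else 0


/-!
Chambers of a central arrangement are the closed sign cones
`{z | ∀ H, 0 ≤ ⟪n_H, w⟫ * ⟪n_H, z⟫}` for `w` off all hyperplanes, and for a closed cone `C`
a point `x` of `C°` lies on `∂(C°)` exactly when `x` is orthogonal to some nonzero `y ∈ C`.

If `x ∈ ∂(C°)` with witness `y`, then `y` moves freely inside `C` along the flat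
`L = ⋂ {H | y ∈ H}`, which forces `x ⊥ L`, and `L ∋ y` is nonzero.
Conversely, if `x ⊥ L = ⋂ B` with `0 ≠ v ∈ L`, write `x = ∑ cᵢ nᵢ` over linearly independent
normals of `B`; prescribing `⟪nᵢ, w⟫ = -cᵢ` gives an open set of directions `w` whose sign cones
lie in `{⟪x, ·⟫ ≤ 0}`. For generic such `w` and small `t > 0`, the chamber of `v + t • w`
contains `v`, and its dual cone contains `x`.
-/

open Filter Topology Submodule
section InnerProductSpace

variable {F : Type*} [NormedAddCommGroup F] [InnerProductSpace ℝ F]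

lemma mem_orthogonal_span_iff {s : Set F} {v : F} :
    v ∈ (span ℝ s)ᗮ ↔ ∀ u ∈ s, ⟪u, v⟫ = 0 := by
  refine ⟨fun h u hu => inner_right_of_mem_orthogonal (subset_span hu) h, fun h => ?_⟩
  have hle : span ℝ s ≤ LinearMap.ker (innerₛₗ ℝ v) :=
    span_le.2 fun u hu => by simpa [real_inner_comm] using h u hu
  exact (mem_orthogonal' _ _).2 fun u hu => hle hu

lemma exists_inner_eq_of_linearIndependent {ι : Type*} [Fintype ι] {b : ι → F}
    (hb : LinearIndependent ℝ b) (c : ι → ℝ) : ∃ w, ∀ i, ⟪b i, w⟫ = c i := by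
  let V := span ℝ (range b)
  have : FiniteDimensional ℝ V := FiniteDimensional.span_of_finite ℝ (finite_range b)
  let f : V →ₗ[ℝ] ι → ℝ := LinearMap.pi fun i => (innerₛₗ ℝ (b i)).comp V.subtype
  have hf : Function.Injective f := by
    refine (injective_iff_map_eq_zero f).2 fun w hw => Subtype.ext ?_
    have hw' : (w : F) ∈ Vᗮ :=
      mem_orthogonal_span_iff.2 (forall_mem_range.2 fun i => congr_fun hw i)
    exact inner_self_eq_zero.1 (inner_right_of_mem_orthogonal w.2 hw')
  have hrank : Module.finrank ℝ V = Module.finrank ℝ (ι → ℝ) := by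
    rw [finrank_span_eq_card hb, Module.finrank_fintype_fun_eq_card]
  obtain ⟨w, hw⟩ := (LinearMap.injective_iff_surjective_of_finrank_eq_finrank hrank).1 hf c
  exact ⟨w, fun i => congr_fun hw i⟩

/-- Writing `x = ∑ cᵢ • bᵢ` over linearly independent `bᵢ ∈ s`, every `w` with
`cᵢ * ⟪bᵢ, w⟫ < 0` whenever `cᵢ ≠ 0` works; `⟪bᵢ, w⟫ = -cᵢ` is one such `w`. -/
lemma exists_isOpen_inner_nonpos_of_mem_span {s : Set F} (hs : s.Finite) {x : F}
    (hx : x ∈ span ℝ s) :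
    ∃ U : Set F, IsOpen U ∧ U.Nonempty ∧
      ∀ w ∈ U, ∀ z, (∀ n ∈ s, 0 ≤ ⟪n, w⟫ * ⟪n, z⟫) → ⟪x, z⟫ ≤ 0 := by
  obtain ⟨b, hbs, hspan, hli⟩ := exists_linearIndependent ℝ s
  have : Fintype b := (hs.subset hbs).fintype
  rw [← hspan, ← Subtype.range_coe (s := b)] at hx
  obtain ⟨c, rfl⟩ := (mem_span_range_iff_exists_fun ℝ).1 hx
  obtain ⟨w₀, hw₀⟩ := exists_inner_eq_of_linearIndependent hli (-c)
  refine ⟨⋂ i, {w | c i ≠ 0 → c i * ⟪(i : F), w⟫ < 0}, isOpen_iInter_of_finite fun i => ?_,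
    ⟨w₀, mem_iInter.2 fun i hi => ?_⟩, fun w hw z hz => ?_⟩
  · by_cases hi : c i = 0
    · simp [hi]
    · simpa [hi] using isOpen_lt (by fun_prop) continuous_const
  · rw [hw₀ i, Pi.neg_apply, mul_neg, neg_neg_iff_pos]
    exact mul_self_pos.2 hi
  · rw [sum_inner]
    refine Finset.sum_nonpos fun i _ => ?_
    rw [real_inner_smul_left]
    by_cases hi : c i = 0
    · simp [hi]
    have hneg := mem_iInter.1 hw i hi
    have hnn := hz i (hbs i.2)
    have hp : ⟪(i : F), w⟫ ≠ 0 := fun h => by simp [h] at hneg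
    refine nonpos_of_mul_nonpos_left ?_ (mul_self_pos.2 hp)
    calc c i * ⟪(i : F), z⟫ * (⟪(i : F), w⟫ * ⟪(i : F), w⟫)
        = c i * ⟪(i : F), w⟫ * (⟪(i : F), w⟫ * ⟪(i : F), z⟫) := by ring
      _ ≤ 0 := mul_nonpos_of_nonpos_of_nonneg hneg.le hnn

lemma eventually_pos_mul_inner_add_smul {a : ℝ} {n y : F} (q : F) (h : 0 < a * ⟪n, y⟫) :
    ∀ᶠ t in 𝓝 (0 : ℝ), 0 < a * ⟪n, y + t • q⟫ := by
  have hc : Continuous fun t : ℝ => a * ⟪n, y + t • q⟫ := by fun_prop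
  exact Tendsto.eventually_const_lt h (by simpa using hc.tendsto 0)

end InnerProductSpace

section Hyperplane

def hyperplaneNormal (H : Set (E d)) : E d :=
  if h : IsLinearHyperplane H then h.choose else 0

namespace IsLinearHyperplane

variable {H : Set (E d)} (h : IsLinearHyperplane H)
include h

lemma hyperplaneNormal_ne_zero : hyperplaneNormal H ≠ 0 := by
  rw [hyperplaneNormal, dif_pos h]
  exact h.choose_spec.1

lemma mem_iff {z : E d} : z ∈ H ↔ ⟪hyperplaneNormal H, z⟫ = 0 := by
  rw [hyperplaneNormal, dif_pos h]
  conv_lhs => rw [h.choose_spec.2]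
  rfl

lemma inner_ne_zero {z : E d} (hz : z ∉ H) : ⟪hyperplaneNormal H, z⟫ ≠ 0 :=
  mt h.mem_iff.2 hz

lemma isClosed : IsClosed H := by
  have : H = {z | ⟪hyperplaneNormal H, z⟫ = 0} := Set.ext fun _ => h.mem_iff
  rw [this]
  exact isClosed_eq (by fun_prop) continuous_const

lemma dense_compl : Dense Hᶜ := by
  rw [← interior_eq_empty_iff_dense_compl, ← not_nonempty_iff_eq_empty]
  intro hne
  have hker : (LinearMap.ker (innerₛₗ ℝ (hyperplaneNormal H)) : Set (E d)) = H := by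
    ext z
    simp [h.mem_iff]
  rw [← hker] at hne
  have htop := Submodule.eq_top_of_nonempty_interior' _ hne
  have hmem : hyperplaneNormal H ∈ LinearMap.ker (innerₛₗ ℝ (hyperplaneNormal H)) :=
    htop ▸ mem_top
  exact h.hyperplaneNormal_ne_zero (by simpa using hmem)

end IsLinearHyperplane

variable {A : Finset (Set (E d))}

lemma dense_compl_biUnion (hA : ∀ H ∈ A, IsLinearHyperplane H) :
    Dense (⋃ H ∈ A, H)ᶜ := by
  rw [compl_iUnion₂]
  simpa using dense_biInter_of_isOpen (S := (A : Set (Set (E d))))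
    (fun H hH => (hA H hH).isClosed.isOpen_compl) A.countable_toSet
    fun H hH => (hA H hH).dense_compl

lemma orthogonal_span_interSet (hA : ∀ H ∈ A, IsLinearHyperplane H) :
    (span ℝ (interSet A))ᗮ = span ℝ (hyperplaneNormal '' (A : Set (Set (E d)))) := by
  have hinter :
      interSet A = ((span ℝ (hyperplaneNormal '' (A : Set (Set (E d)))))ᗮ : Set (E d)) := by
    ext z
    simp only [interSet, mem_iInter₂, SetLike.mem_coe, mem_orthogonal_span_iff, forall_mem_image]
    exact forall₂_congr fun H hH => (hA H hH).mem_iff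
  rw [hinter, span_eq, orthogonal_orthogonal]

end Hyperplane

section Cell

def openCell (A : Finset (Set (E d))) (w : E d) : Set (E d) :=
  {z | ∀ H ∈ A, 0 < ⟪hyperplaneNormal H, w⟫ * ⟪hyperplaneNormal H, z⟫}

def closedCell (A : Finset (Set (E d))) (w : E d) : Set (E d) :=
  {z | ∀ H ∈ A, 0 ≤ ⟪hyperplaneNormal H, w⟫ * ⟪hyperplaneNormal H, z⟫}

variable {A : Finset (Set (E d))} {w : E d}

lemma isClosed_closedCell (A : Finset (Set (E d))) (w : E d) : IsClosed (closedCell A w) := by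
  simp only [closedCell, ofPred_forall]
  exact isClosed_biInter fun H _ => isClosed_le continuous_const (by fun_prop)

lemma convex_openCell (A : Finset (Set (E d))) (w : E d) : Convex ℝ (openCell A w) := by
  intro x hx y hy a b ha hb hab H hH
  rw [inner_add_right, real_inner_smul_right, real_inner_smul_right]
  rcases ha.lt_or_eq with ha | rfl
  · nlinarith [hx H hH, hy H hH, mul_nonneg hb (hy H hH).le]
  · nlinarith [hy H hH]

lemma smul_mem_closedCell {z : E d} (hz : z ∈ closedCell A w) {t : ℝ} (ht : 0 ≤ t) :
    t • z ∈ closedCell A w := fun H hH => by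
  rw [real_inner_smul_right, mul_left_comm]
  exact mul_nonneg ht (hz H hH)

variable (hA : ∀ H ∈ A, IsLinearHyperplane H)
include hA

lemma inner_hyperplaneNormal_ne_zero (hw : w ∉ ⋃ H ∈ A, H) {H : Set (E d)} (hH : H ∈ A) :
    ⟪hyperplaneNormal H, w⟫ ≠ 0 :=
  (hA H hH).inner_ne_zero fun hwH => hw (mem_biUnion hH hwH)

lemma mem_openCell_self (hw : w ∉ ⋃ H ∈ A, H) : w ∈ openCell A w := fun _ hH =>
  mul_self_pos.2 (inner_hyperplaneNormal_ne_zero hA hw hH)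

lemma openCell_subset_compl (w : E d) : openCell A w ⊆ (⋃ H ∈ A, H)ᶜ := by
  intro z hz hzA
  obtain ⟨H, hH, hzH⟩ := mem_iUnion₂.1 hzA
  have := hz H hH
  rw [(hA H hH).mem_iff.1 hzH, mul_zero] at this
  exact this.false

lemma connectedComponentIn_compl_eq_openCell (hw : w ∉ ⋃ H ∈ A, H) :
    connectedComponentIn (⋃ H ∈ A, H)ᶜ w = openCell A w := by
  refine Subset.antisymm (fun z hz H hH => ?_)
    ((convex_openCell A w).isPreconnected.subset_connectedComponentIn
      (mem_openCell_self hA hw) (openCell_subset_compl hA w))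
  set f : E d → ℝ := fun u => ⟪hyperplaneNormal H, w⟫ * ⟪hyperplaneNormal H, u⟫
  have hpre : IsPreconnected (f '' connectedComponentIn (⋃ H ∈ A, H)ᶜ w) :=
    isPreconnected_connectedComponentIn.image f (by fun_prop)
  by_contra! hz0
  -- A sign change of `f` along the component would force it to meet `H`.
  obtain ⟨u, hu, hfu⟩ := hpre.Icc_subset (mem_image_of_mem f hz)
    (mem_image_of_mem f (mem_connectedComponentIn hw))
    ⟨hz0, (mem_openCell_self hA hw H hH).le⟩
  have huH : u ∈ H := by
    rcases mul_eq_zero.1 hfu with h | h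
    · exact absurd h (inner_hyperplaneNormal_ne_zero hA hw hH)
    · exact (hA H hH).mem_iff.2 h
  exact connectedComponentIn_subset _ _ hu (mem_biUnion hH huH)

lemma closure_openCell (hw : w ∉ ⋃ H ∈ A, H) : closure (openCell A w) = closedCell A w := by
  refine Subset.antisymm
    (closure_minimal (fun z hz H hH => (hz H hH).le) (isClosed_closedCell A w)) fun z hz => ?_
  have hseg : openSegment ℝ z w ⊆ openCell A w := by
    rintro _ ⟨a, b, ha, hb, -, rfl⟩ H hH
    rw [inner_add_right, real_inner_smul_right, real_inner_smul_right]
    nlinarith [mul_nonneg ha.le (hz H hH), mul_pos hb (mem_openCell_self hA hw H hH)]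
  exact closure_mono hseg (segment_subset_closure_openSegment (left_mem_segment ℝ z w))

lemma isChamber_iff (P : Set (E d)) :
    IsChamber A P ↔ ∃ w, w ∉ ⋃ H ∈ A, H ∧ P = closedCell A w := by
  refine exists_congr fun w => and_congr_right fun hw => ?_
  rw [connectedComponentIn_compl_eq_openCell hA hw, closure_openCell hA hw]

lemma eventually_add_smul_mem_closedCell (hw : w ∉ ⋃ H ∈ A, H) {y q : E d}
    (hy : y ∈ closedCell A w) (hq : ∀ H ∈ A, y ∈ H → q ∈ H) :
    ∀ᶠ t in 𝓝 (0 : ℝ), y + t • q ∈ closedCell A w := by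
  refine (Finset.eventually_all A).2 fun H hH => ?_
  by_cases hyH : y ∈ H
  · refine Eventually.of_forall fun t => ?_
    rw [inner_add_right, real_inner_smul_right, (hA H hH).mem_iff.1 hyH,
      (hA H hH).mem_iff.1 (hq H hH hyH)]
    simp
  · have hpos := lt_of_le_of_ne (hy H hH)
      (mul_ne_zero (inner_hyperplaneNormal_ne_zero hA hw hH) ((hA H hH).inner_ne_zero hyH)).symm
    exact (eventually_pos_mul_inner_add_smul q hpos).mono fun _ ht => ht.le

/-- The chamber of `v + t • w` for small `t > 0`. -/
lemma exists_closedCell_mem_subset_filter (hw : w ∉ ⋃ H ∈ A, H) (v : E d) :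
    ∃ y, y ∉ ⋃ H ∈ A, H ∧ v ∈ closedCell A y ∧
      closedCell A y ⊆ closedCell (A.filter (v ∈ ·)) w := by
  obtain ⟨t, ht, ht0⟩ : ∃ t : ℝ, (∀ H ∈ A, v ∉ H →
      0 < ⟪hyperplaneNormal H, v⟫ * ⟪hyperplaneNormal H, v + t • w⟫) ∧ 0 < t := by
    have hev : ∀ᶠ t in 𝓝 (0 : ℝ), ∀ H ∈ A, v ∉ H →
        0 < ⟪hyperplaneNormal H, v⟫ * ⟪hyperplaneNormal H, v + t • w⟫ := by
      refine (Finset.eventually_all A).2 fun H hH => ?_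
      by_cases hvH : v ∈ H
      · exact Eventually.of_forall fun _ h => absurd hvH h
      · exact (eventually_pos_mul_inner_add_smul w
          (mul_self_pos.2 ((hA H hH).inner_ne_zero hvH))).mono fun _ h _ => h
    exact ((hev.filter_mono nhdsWithin_le_nhds).and (self_mem_nhdsWithin (s := Ioi 0))).exists
  have hyv : ∀ H ∈ A, v ∈ H →
      ⟪hyperplaneNormal H, v + t • w⟫ = t * ⟪hyperplaneNormal H, w⟫ := by
    intro H hH hvH
    rw [inner_add_right, (hA H hH).mem_iff.1 hvH, real_inner_smul_right, zero_add]
  refine ⟨v + t • w, fun hyA => ?_, fun H hH => ?_, fun z hz H hH => ?_⟩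
  · obtain ⟨H, hH, hyH⟩ := mem_iUnion₂.1 hyA
    rw [(hA H hH).mem_iff] at hyH
    by_cases hvH : v ∈ H
    · rw [hyv H hH hvH] at hyH
      exact mul_ne_zero ht0.ne' (inner_hyperplaneNormal_ne_zero hA hw hH) hyH
    · have := ht H hH hvH
      rw [hyH, mul_zero] at this
      exact this.false
  · by_cases hvH : v ∈ H
    · rw [(hA H hH).mem_iff.1 hvH, mul_zero]
    · rw [mul_comm]
      exact (ht H hH hvH).le
  · obtain ⟨hHA, hvH⟩ := Finset.mem_filter.1 hH
    have := hz H hHA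
    rw [hyv H hHA hvH, mul_assoc] at this
    exact nonneg_of_mul_nonneg_right this ht0

end Cell

section PolarCone

lemma isClosed_polarCone (C : Set (E d)) : IsClosed (polarCone C) := by
  simp only [polarCone, ofPred_forall]
  exact isClosed_biInter fun y _ => isClosed_le (by fun_prop) continuous_const

/-- On a closed cone, a uniform bound `⟪x, u⟫ ≤ -m` over unit vectors `u ∈ C` (by compactness)
keeps the ball of radius `m` around `x` inside `C°`. -/
lemma mem_interior_polarCone {C : Set (E d)} (hC : IsClosed C)
    (hcone : ∀ z ∈ C, ∀ t : ℝ, 0 < t → t • z ∈ C) {x : E d}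
    (hx : ∀ y ∈ C, y ≠ 0 → ⟪x, y⟫ < 0) : x ∈ interior (polarCone C) := by
  set S := C ∩ Metric.sphere 0 1
  have hS : IsCompact S := (isCompact_sphere 0 1).inter_left hC
  obtain ⟨m, hm, hmS⟩ : ∃ m > 0, ∀ u ∈ S, ⟪x, u⟫ ≤ -m := by
    rcases S.eq_empty_or_nonempty with hS0 | hS0
    · exact ⟨1, one_pos, by simp [hS0]⟩
    obtain ⟨u₀, hu₀, hmax⟩ := hS.exists_isMaxOn hS0 (f := fun u => ⟪x, u⟫) (by fun_prop)
    have hu₀0 : u₀ ≠ 0 := ne_zero_of_mem_unit_sphere ⟨u₀, hu₀.2⟩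
    exact ⟨-⟪x, u₀⟫, neg_pos.2 (hx u₀ hu₀.1 hu₀0), fun u hu => by simpa using hmax hu⟩
  refine mem_interior_iff_mem_nhds.2 (Metric.mem_nhds_iff.2 ⟨m, hm, fun x' hx' y hy => ?_⟩)
  rcases eq_or_ne y 0 with rfl | hy0
  · simp
  have hyn : 0 < ‖y‖ := norm_pos_iff.2 hy0
  have hu : ‖y‖⁻¹ • y ∈ S :=
    ⟨hcone y hy _ (inv_pos.2 hyn), by simp [norm_smul, hyn.ne']⟩
  have hclose : ⟪x' - x, ‖y‖⁻¹ • y⟫ < m := by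
    calc ⟪x' - x, ‖y‖⁻¹ • y⟫ ≤ ‖x' - x‖ * ‖‖y‖⁻¹ • y‖ := real_inner_le_norm _ _
      _ = ‖x' - x‖ := by simp [norm_smul, hyn.ne']
      _ < m := by rwa [← dist_eq_norm]
  have hneg : ⟪x', ‖y‖⁻¹ • y⟫ < 0 := by
    have hsplit : x' = x + (x' - x) := by abel
    rw [hsplit, inner_add_left]
    linarith [hmS _ hu]
  rw [real_inner_smul_right] at hneg
  exact (neg_of_mul_neg_right hneg (inv_pos.2 hyn).le).le

lemma mem_frontier_polarCone_iff {C : Set (E d)} (hC : IsClosed C)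
    (hcone : ∀ z ∈ C, ∀ t : ℝ, 0 < t → t • z ∈ C) {x : E d} :
    x ∈ frontier (polarCone C) ↔ x ∈ polarCone C ∧ ∃ y ∈ C, y ≠ 0 ∧ ⟪x, y⟫ = 0 := by
  constructor
  · intro hx
    have hxC : x ∈ polarCone C := (isClosed_polarCone C).frontier_subset hx
    refine ⟨hxC, ?_⟩
    by_contra! h
    exact hx.2 (mem_interior_polarCone hC hcone fun y hy hy0 =>
      lt_of_le_of_ne (hxC y hy) (h y hy hy0))
  · rintro ⟨hxC, y, hy, hy0, hxy⟩
    have hlim : Tendsto (fun t : ℝ => x + t • y) (𝓝[>] 0) (𝓝 x) := by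
      have hc : Continuous fun t : ℝ => x + t • y := by fun_prop
      simpa using (hc.tendsto 0).mono_left nhdsWithin_le_nhds
    rw [frontier_eq_closure_inter_closure]
    refine ⟨subset_closure hxC, mem_closure_of_tendsto hlim ?_⟩
    filter_upwards [self_mem_nhdsWithin] with t (ht : 0 < t) hmem
    have := hmem y hy
    rw [inner_add_left, hxy, real_inner_smul_left, zero_add] at this
    exact (mul_pos ht (real_inner_self_pos.2 hy0)).not_ge this

lemma inner_eq_zero_of_eventually_add_smul_mem {C : Set (E d)} {x y q : E d}
    (hx : x ∈ polarCone C) (hxy : ⟪x, y⟫ = 0) (hq : ∀ᶠ t in 𝓝 (0 : ℝ), y + t • q ∈ C) :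
    ⟪x, q⟫ = 0 := by
  obtain ⟨ε, hε, hball⟩ := Metric.eventually_nhds_iff.1 hq
  have hmem : ∀ t : ℝ, |t| < ε → t * ⟪x, q⟫ ≤ 0 := fun t ht => by
    have := hx _ (hball (by simpa using ht))
    rwa [inner_add_right, hxy, real_inner_smul_right, zero_add] at this
  have h₁ := hmem (ε / 2) (by rw [abs_of_pos (half_pos hε)]; linarith)
  have h₂ := hmem (-(ε / 2)) (by rw [abs_neg, abs_of_pos (half_pos hε)]; linarith)
  nlinarith

end PolarCone

variable {A : Finset (Set (E d))}

lemma exists_isChamber_mem_frontier_polarCone (hA : ∀ H ∈ A, IsLinearHyperplane H)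
    {B : Finset (Set (E d))} (hBA : B ⊆ A) {v x : E d} (hv : v ∈ interSet B) (hv0 : v ≠ 0)
    (hx : x ∈ (span ℝ (interSet B))ᗮ) :
    ∃ P, IsChamber A P ∧ x ∈ frontier (polarCone P) := by
  have hB : ∀ H ∈ B, IsLinearHyperplane H := fun H hH => hA H (hBA hH)
  obtain ⟨U, hUo, hUne, hU⟩ := exists_isOpen_inner_nonpos_of_mem_span
    (B.finite_toSet.image _) (orthogonal_span_interSet hB ▸ hx)
  obtain ⟨w, hwU, hw⟩ := (dense_compl_biUnion hA).inter_open_nonempty U hUo hUne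
  obtain ⟨y, hy, hvy, hyw⟩ := exists_closedCell_mem_subset_filter hA hw v
  refine ⟨closedCell A y, (isChamber_iff hA _).2 ⟨y, hy, rfl⟩,
    (mem_frontier_polarCone_iff (isClosed_closedCell A y)
      fun z hz s hs => smul_mem_closedCell hz hs.le).2
      ⟨fun z hz => hU w hwU z ?_, v, hvy, hv0, inner_left_of_mem_orthogonal (subset_span hv) hx⟩⟩
  rw [forall_mem_image]
  exact fun H hH => hyw hz H (Finset.mem_filter.2 ⟨hBA hH, mem_iInter₂.1 hv H hH⟩)

lemma exists_interSet_ne_mem_orthogonal_of_mem_frontier (hA : ∀ H ∈ A, IsLinearHyperplane H)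
    {P : Set (E d)} (hP : IsChamber A P) {x : E d} (hx : x ∈ frontier (polarCone P)) :
    ∃ B ∈ A.powerset, interSet B ≠ ({0} : Set (E d)) ∧ x ∈ (span ℝ (interSet B))ᗮ := by
  obtain ⟨w, hw, rfl⟩ := (isChamber_iff hA P).1 hP
  obtain ⟨hxC, y, hy, hy0, hxy⟩ := (mem_frontier_polarCone_iff (isClosed_closedCell A w)
    fun z hz t ht => smul_mem_closedCell hz ht.le).1 hx
  have hyB : y ∈ interSet (A.filter (y ∈ ·)) :=
    mem_iInter₂.2 fun H hH => (Finset.mem_filter.1 hH).2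
  refine ⟨A.filter (y ∈ ·), Finset.mem_powerset.2 (Finset.filter_subset _ _),
    fun h => hy0 (by rwa [h, mem_singleton_iff] at hyB), mem_orthogonal_span_iff.2 fun q hq => ?_⟩
  rw [real_inner_comm]
  exact inner_eq_zero_of_eventually_add_smul_mem hxC hxy
    (eventually_add_smul_mem_closedCell hA hw hy fun H hH hyH =>
      mem_iInter₂.1 hq H (Finset.mem_filter.2 ⟨hH, hyH⟩))

/-- the union of orthogonal complements of nonzero members of the
intersection lattice equals the union of boundaries of dual cones of chambers. -/
theorem stmt3 {d : ℕ} (A : Finset (Set (E d)))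
    (hA : ∀ H ∈ A, IsLinearHyperplane H) :
    {x : E d | ∃ B ∈ A.powerset, interSet B ≠ ({0} : Set (E d)) ∧
        x ∈ ((Submodule.span ℝ (interSet B))ᗮ : Submodule ℝ (E d))} =
    {x : E d | ∃ P, IsChamber A P ∧ x ∈ frontier (polarCone P)} := by
  ext x
  constructor
  · rintro ⟨B, hB, hL, hx⟩
    have hBA := Finset.mem_powerset.1 hB
    have h0 : (0 : E d) ∈ interSet B :=
      mem_iInter₂.2 fun H hH => (hA H (hBA hH)).mem_iff.2 (inner_zero_right _)
    obtain ⟨v, hv, hv0⟩ : ∃ v ∈ interSet B, v ≠ 0 := by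
      by_contra! h
      exact hL (eq_singleton_iff_unique_mem.2 ⟨h0, h⟩)
    exact exists_isChamber_mem_frontier_polarCone hA hBA hv hv0 hx
  · rintro ⟨P, hP, hx⟩
    exact exists_interSet_ne_mem_orthogonal_of_mem_frontier hA hP hx
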